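/- arXiv:1902.00306 — 7 statements merged into one kernel-verified Lean document; each statement's English description precedes it below -/
import Mathlib

section
/- Let k ≥ 5 and let G be a graph on at least k+1 vertices with m(G) < (k+1)/2 in which every vertex and edge lies in a copy of K_k. Let v be a minimum-degree vertex, R(v) as defined, and G_v the graph obtained from the induced subgraph of G on V(G) \ V(R(v)) by deleting all edges not contained in any k-clique. If G_v has at most k vertices, then G_v is a complete graph K_k. -/
/-!
If every `k`-clique contained `v`, then every vertex, lying in some `k`-clique, would be adjacent
to `v`; so `v` would be universal, and since `v` has minimum degree every vertex would be
universal, i.e. `G` would be complete on at least `k + 1` vertices and hence contain a `k`-clique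
avoiding `v`. A `k`-clique avoiding `v` lies in the complement `A` of `R(v)`, and `|A| ≤ k`
forces it to be all of `A`.
-/

namespace SimpleGraph

variable {V : Type*} {G : SimpleGraph V} {k : ℕ}

lemma isUniversal_of_forall_isNClique_mem {v : V}
    (hvtx : ∀ x : V, ∃ s : Finset V, G.IsNClique k s ∧ x ∈ s)
    (hv : ∀ s : Finset V, G.IsNClique k s → v ∈ s) : G.IsUniversal v := by
  intro x hvx
  obtain ⟨s, hs, hxs⟩ := hvtx x
  exact hs.isClique (hv s hs) hxs hvx

lemma IsUniversal.of_degree_le [Fintype V] [DecidableRel G.Adj] {u v : V}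
    (hv : G.IsUniversal v) (hdeg : G.degree v ≤ G.degree u) : G.IsUniversal u := by
  rw [← degree_eq_card_sub_one] at hv ⊢
  have := G.degree_lt_card_verts u
  omega

lemma exists_isNClique_notMem_of_isUniversal [Fintype V] [DecidableEq V]
    (hcard : k + 1 ≤ Fintype.card V) (huniv : ∀ u : V, G.IsUniversal u) (v : V) :
    ∃ s : Finset V, G.IsNClique k s ∧ v ∉ s := by
  obtain ⟨s, hsv, hs⟩ := Finset.exists_subset_card_eq (s := Finset.univ.erase v) (n := k)
    (by rw [Finset.card_erase_of_mem (Finset.mem_univ v), Finset.card_univ]; omega)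
  exact ⟨s, ⟨fun x _ y _ hxy ↦ huniv x hxy, hs⟩, fun hvs ↦ by simpa using hsv hvs⟩

lemma exists_isNClique_notMem_of_degree_le [Fintype V] [DecidableRel G.Adj]
    (hcard : k + 1 ≤ Fintype.card V)
    (hvtx : ∀ x : V, ∃ s : Finset V, G.IsNClique k s ∧ x ∈ s)
    {v : V} (hmin : ∀ u : V, G.degree v ≤ G.degree u) :
    ∃ s : Finset V, G.IsNClique k s ∧ v ∉ s := by
  classical
  by_contra! hv
  have huniv := isUniversal_of_forall_isNClique_mem hvtx hv
  obtain ⟨s, hs, hvs⟩ :=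
    exists_isNClique_notMem_of_isUniversal hcard (fun u ↦ huniv.of_degree_le (hmin u)) v
  exact hvs (hv s hs)

end SimpleGraph

theorem Gv_is_complete_of_card_le_general {V : Type*} [Fintype V]
    (k : ℕ) (G : SimpleGraph V) [DecidableRel G.Adj]
    (hcard : k + 1 ≤ Fintype.card V)
    (hvtx : ∀ x : V, ∃ s : Finset V, G.IsNClique k s ∧ x ∈ s)
    (v : V) (hmin : ∀ u : V, G.degree v ≤ G.degree u)
    (A : Set V)
    (hA : A = (({v} ∪ {w : V | G.Adj v w ∧
        ∀ s : Finset V, G.IsNClique k s → w ∈ s → v ∈ s}) : Set V)ᶜ)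
    (hAcard : A.ncard ≤ k) :
    A.ncard = k ∧ ∀ x ∈ A, ∀ y ∈ A, x ≠ y →
      (G.Adj x y ∧ ∃ s : Finset V, G.IsNClique k s ∧ ↑s ⊆ A ∧ x ∈ s ∧ y ∈ s) := by
  obtain ⟨s, hs, hvs⟩ := G.exists_isNClique_notMem_of_degree_le hcard hvtx hmin
  have hsA : (s : Set V) ⊆ A := by
    rw [hA]
    rintro x hxs (rfl | ⟨-, hx⟩)
    exacts [hvs hxs, hvs (hx s hs hxs)]
  have hsA_eq : (s : Set V) = A :=
    Set.eq_of_subset_of_ncard_le hsA (by rwa [Set.ncard_coe_finset, hs.card_eq])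
  subst hsA_eq
  refine ⟨by rw [Set.ncard_coe_finset, hs.card_eq], fun x hx y hy hxy ↦ ?_⟩
  exact ⟨hs.isClique hx hy hxy, s, hs, subset_rfl, hx, hy⟩

/-- Let `k ≥ 5` and let `G` be a graph on at least `k+1` vertices with
`m(G) < (k+1)/2` in which every vertex and edge lies in a `k`-clique.
Let `v` be a minimum-degree vertex, `R(v)` as defined, and `G_v` the graph on the
vertex set `V(G) \ V(R(v))` whose edges are those edges of `G` lying inside a
`k`-clique contained in `V(G) \ V(R(v))`.  If `G_v` has at most `k` vertices,
then `G_v` is a complete graph `K_k`. -/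
theorem Gv_is_complete_of_card_le {V : Type*} [Fintype V] [DecidableEq V]
    (k : ℕ) (hk : 5 ≤ k) (G : SimpleGraph V) [DecidableRel G.Adj]
    (hcard : k + 1 ≤ Fintype.card V)
    (hm : ∀ J : G.Subgraph, J.verts.Nonempty →
      (J.edgeSet.ncard : ℝ) / (J.verts.ncard : ℝ) < ((k : ℝ) + 1) / 2)
    (hvtx : ∀ x : V, ∃ s : Finset V, G.IsNClique k s ∧ x ∈ s)
    (hedge : ∀ x y : V, G.Adj x y → ∃ s : Finset V, G.IsNClique k s ∧ x ∈ s ∧ y ∈ s)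
    (v : V) (hmin : ∀ u : V, G.degree v ≤ G.degree u)
    (A : Set V)
    (hA : A = (({v} ∪ {w : V | G.Adj v w ∧
        ∀ s : Finset V, G.IsNClique k s → w ∈ s → v ∈ s}) : Set V)ᶜ)
    (hAcard : A.ncard ≤ k) :
    A.ncard = k ∧ ∀ x ∈ A, ∀ y ∈ A, x ≠ y →
      (G.Adj x y ∧ ∃ s : Finset V, G.IsNClique k s ∧ ↑s ⊆ A ∧ x ∈ s ∧ y ∈ s) :=
  Gv_is_complete_of_card_le_general k G hcard hvtx v hmin A hA hAcard
end

section
/- Let k ≥ 5 and let G be a graph with m(G) < (k+1)/2 in which every vertex and edge lies in a k-clique. If v is a vertex of minimum degree, then the subgraph K(v) induced on {v} ∪ N(v) is isomorphic to K_k, to K_{k+1} minus one edge, or to K_{k+1}. -/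
/-!
The minimum degree is at most the average degree `2 e(G) / |G| < k + 1`, and the `k`-clique
through `v` gives `deg v ≥ k - 1`. If `deg v = k - 1`, that clique is all of `K(v)`.
If `deg v = k`, then `|K(v)| = k + 1` and every vertex `a` of `K(v)` lies in a `k`-clique inside
`K(v)` (one through the edge `va`), which therefore misses exactly one vertex. For a non-edge
`ab` of `K(v)` the clique through `a` is `K(v) - b`, so every non-edge of `K(v)` contains `b`,
and likewise `a`: `ab` is the only non-edge.
-/

open SimpleGraph Finset

theorem Equiv.exists_apply_eq_and_apply_eq {α β : Type*} [DecidableEq β] (e₀ : α ≃ β)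
    {a b : α} {c d : β} (hab : a ≠ b) (hcd : c ≠ d) :
    ∃ e : α ≃ β, e a = c ∧ e b = d := by
  set e₁ := e₀.trans (Equiv.swap (e₀ a) c)
  have he₁a : e₁ a = c := by simp [e₁]
  have he₁b : e₁ b ≠ c := he₁a ▸ e₁.injective.ne hab.symm
  refine ⟨e₁.trans (Equiv.swap (e₁ b) d), ?_, by simp⟩
  simp only [Equiv.trans_apply, he₁a]
  exact Equiv.swap_apply_of_ne_of_ne he₁b.symm hcd

namespace SimpleGraph

variable {V : Type*} {G : SimpleGraph V}

def Iso.topDeleteEdge {α β : Type*} (e : α ≃ β) (a b : α) :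
    (⊤ : SimpleGraph α).deleteEdges {s(a, b)} ≃g
      (⊤ : SimpleGraph β).deleteEdges {s(e a, e b)} where
  toEquiv := e
  map_rel_iff' := by simp

theorem nonempty_induce_iso_top_of_isClique {S : Set V} [Finite S] {n : ℕ}
    (hS : G.IsClique S) (hcard : S.ncard = n) :
    Nonempty (G.induce S ≃g (⊤ : SimpleGraph (Fin n))) := by
  rw [induce_eq_top.mpr hS]
  exact ⟨Iso.completeGraph ((Finite.equivFin S).trans (finCongr hcard))⟩

theorem nonempty_induce_iso_top_deleteEdges {S : Set V} [Finite S] {n : ℕ}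
    (hcard : S.ncard = n) {x y : V} (hx : x ∈ S) (hy : y ∈ S) (hxy : x ≠ y)
    (hnxy : ¬ G.Adj x y)
    (hadj : ∀ a ∈ S, ∀ b ∈ S, a ≠ b → ¬ G.Adj a b → s(a, b) = s(x, y))
    {c d : Fin n} (hcd : c ≠ d) :
    Nonempty (G.induce S ≃g (⊤ : SimpleGraph (Fin n)).deleteEdges {s(c, d)}) := by
  have hind : G.induce S = (⊤ : SimpleGraph S).deleteEdges {s(⟨x, hx⟩, ⟨y, hy⟩)} := by
    ext a b
    simp only [comap_adj, Function.Embedding.coe_subtype, deleteEdges_adj, top_adj,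
      Set.mem_singleton_iff]
    constructor
    · intro h
      refine ⟨fun hab => G.ne_of_adj h (congrArg Subtype.val hab), fun he => ?_⟩
      rcases Sym2.eq_iff.mp he with ⟨rfl, rfl⟩ | ⟨rfl, rfl⟩
      exacts [hnxy h, hnxy h.symm]
    · rintro ⟨hab, he⟩
      by_contra hn
      refine he (Sym2.map.injective Subtype.coe_injective ?_)
      simpa using hadj a a.2 b b.2 (Subtype.coe_injective.ne hab) hn
  obtain ⟨e, rfl, rfl⟩ :=
    ((Finite.equivFin S).trans (finCongr hcard)).exists_apply_eq_and_apply_eq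
    (a := ⟨x, hx⟩) (b := ⟨y, hy⟩) (fun h => hxy (congrArg Subtype.val h)) hcd
  exact hind ▸ ⟨Iso.topDeleteEdge e _ _⟩

theorem ncard_singleton_union_neighborSet (v : V) [Fintype (G.neighborSet v)] :
    ({v} ∪ G.neighborSet v).ncard = G.degree v + 1 := by
  rw [Set.singleton_union, Set.ncard_insert_of_notMem G.notMem_neighborSet_self,
    ← Nat.card_coe_set_eq, Nat.card_eq_fintype_card, card_neighborSet_eq_degree]

theorem IsClique.subset_singleton_union_neighborSet {s : Set V} (hs : G.IsClique s) {v : V}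
    (hv : v ∈ s) : s ⊆ {v} ∪ G.neighborSet v := by
  intro u hu
  obtain rfl | huv := eq_or_ne v u
  · exact Or.inl rfl
  · exact Or.inr (hs hv hu huv)

theorem IsNClique.le_degree_add_one {n : ℕ} {s : Finset V} (hs : G.IsNClique n s) {v : V}
    (hv : v ∈ s) [Fintype (G.neighborSet v)] : n ≤ G.degree v + 1 := by
  rw [← hs.card_eq, ← Set.ncard_coe_finset, ← ncard_singleton_union_neighborSet]
  exact Set.ncard_le_ncard (hs.isClique.subset_singleton_union_neighborSet hv)

theorem degree_lt_of_ncard_edgeSet_div_lt [Fintype V] [DecidableRel G.Adj] {v : V}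
    (hmin : ∀ u, G.degree v ≤ G.degree u) {d : ℝ}
    (h : (G.edgeSet.ncard : ℝ) / Nat.card V < d / 2) : (G.degree v : ℝ) < d := by
  have hV : (0 : ℝ) < Fintype.card V := by exact_mod_cast Fintype.card_pos_iff.mpr ⟨v⟩
  have hsum : Fintype.card V * G.degree v ≤ 2 * G.edgeSet.ncard := by
    rw [← coe_edgeFinset, Set.ncard_coe_finset, ← sum_degrees_eq_twice_card_edges]
    simpa using Finset.card_nsmul_le_sum univ (G.degree ·) _ fun u _ => hmin u
  rw [Nat.card_eq_fintype_card, div_lt_div_iff₀ hV two_pos] at h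
  have hsum' : (Fintype.card V : ℝ) * G.degree v ≤ 2 * G.edgeSet.ncard := by exact_mod_cast hsum
  nlinarith

theorem IsNClique.eq_or_eq_of_not_adj {S : Set V} [Finite S] {k : ℕ} (hS : S.ncard = k + 1)
    {t : Finset V} (ht : G.IsNClique k t) (htS : ↑t ⊆ S) {b : V} (hb : b ∈ S) (hbt : b ∉ t)
    {x y : V} (hx : x ∈ S) (hy : y ∈ S) (hxy : x ≠ y) (hnxy : ¬ G.Adj x y) :
    x = b ∨ y = b := by
  have hteq : (t : Set V) = S \ {b} := by
    refine Set.eq_of_subset_of_ncard_le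
      (fun u hu => ⟨htS hu, fun h => hbt (Set.mem_singleton_iff.mp h ▸ hu)⟩) ?_
    rw [Set.ncard_sdiff_singleton_of_mem hb, hS, Set.ncard_coe_finset, ht.card_eq,
      Nat.add_sub_cancel]
  by_contra! h
  have hxt : x ∈ (t : Set V) := hteq ▸ ⟨hx, h.1⟩
  have hyt : y ∈ (t : Set V) := hteq ▸ ⟨hy, h.2⟩
  exact hnxy (ht.isClique hxt hyt hxy)

theorem sym2_eq_of_not_adj_of_not_adj {S : Set V} [Finite S] {k : ℕ} (hS : S.ncard = k + 1)
    (hcov : ∀ a ∈ S, ∃ t : Finset V, G.IsNClique k t ∧ a ∈ t ∧ ↑t ⊆ S)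
    {a b x y : V} (ha : a ∈ S) (hb : b ∈ S) (hab : a ≠ b) (hnab : ¬ G.Adj a b)
    (hx : x ∈ S) (hy : y ∈ S) (hxy : x ≠ y) (hnxy : ¬ G.Adj x y) :
    s(x, y) = s(a, b) := by
  have hmem : ∀ {a b : V}, a ∈ S → b ∈ S → a ≠ b → ¬ G.Adj a b →
      x = b ∨ y = b := by
    intro a b ha hb hab hnab
    obtain ⟨t, ht, hat, htS⟩ := hcov a ha
    exact ht.eq_or_eq_of_not_adj hS htS hb (fun hbt => hnab (ht.isClique hat hbt hab))
      hx hy hxy hnxy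
  rw [Sym2.eq_iff]
  rcases hmem ha hb hab hnab with rfl | rfl <;>
    rcases hmem hb ha hab.symm (fun h => hnab h.symm) with rfl | rfl <;> simp_all

end SimpleGraph

theorem Kv_trichotomy_general {V : Type*} [Fintype V]
    (k : ℕ) (G : SimpleGraph V) [DecidableRel G.Adj]
    (hm : ∀ J : G.Subgraph, J.verts.Nonempty →
      (J.edgeSet.ncard : ℝ) / (J.verts.ncard : ℝ) < ((k : ℝ) + 1) / 2)
    (hvtx : ∀ x : V, ∃ s : Finset V, G.IsNClique k s ∧ x ∈ s)
    (hedge : ∀ x y : V, G.Adj x y → ∃ s : Finset V, G.IsNClique k s ∧ x ∈ s ∧ y ∈ s)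
    (v : V) (hmin : ∀ u : V, G.degree v ≤ G.degree u) :
    Nonempty ((G.induce ({v} ∪ G.neighborSet v)) ≃g (⊤ : SimpleGraph (Fin k))) ∨
    Nonempty ((G.induce ({v} ∪ G.neighborSet v)) ≃g
      ((⊤ : SimpleGraph (Fin (k + 1))).deleteEdges {s(0, 1)})) ∨
    Nonempty ((G.induce ({v} ∪ G.neighborSet v)) ≃g (⊤ : SimpleGraph (Fin (k + 1)))) := by
  set S := {v} ∪ G.neighborSet v
  have hS : S.ncard = G.degree v + 1 := ncard_singleton_union_neighborSet v
  obtain ⟨s, hs, hvs⟩ := hvtx v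
  have hsS : ↑s ⊆ S := hs.isClique.subset_singleton_union_neighborSet hvs
  have hlow : k ≤ G.degree v + 1 := hs.le_degree_add_one hvs
  have hup : (G.degree v : ℝ) < k + 1 :=
    degree_lt_of_ncard_edgeSet_div_lt hmin (by simpa using hm ⊤ ⟨v, trivial⟩)
  norm_cast at hup
  obtain hdeg | hdeg : G.degree v + 1 = k ∨ G.degree v = k := by omega
  · left
    have hsS_eq : (s : Set V) = S :=
      Set.eq_of_subset_of_ncard_le hsS (by rw [hS, Set.ncard_coe_finset, hs.card_eq, hdeg])
    exact nonempty_induce_iso_top_of_isClique (hsS_eq ▸ hs.isClique) (hS.trans hdeg)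
  right
  have hcov : ∀ a ∈ S, ∃ t : Finset V, G.IsNClique k t ∧ a ∈ t ∧ ↑t ⊆ S := by
    rintro a (rfl | hva)
    · exact ⟨s, hs, hvs, hsS⟩
    · obtain ⟨t, ht, hvt, hat⟩ := hedge v a hva
      exact ⟨t, ht, hat, ht.isClique.subset_singleton_union_neighborSet hvt⟩
  have hS' : S.ncard = k + 1 := hdeg ▸ hS
  by_cases hclique : G.IsClique S
  · exact Or.inr (nonempty_induce_iso_top_of_isClique hclique hS')
  left
  obtain ⟨x, hx, y, hy, hxy, hnxy⟩ : ∃ x ∈ S, ∃ y ∈ S, x ≠ y ∧ ¬ G.Adj x y := by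
    simpa [IsClique, Set.Pairwise] using hclique
  have hk : 0 < k := hs.card_eq ▸ Finset.card_pos.mpr ⟨v, hvs⟩
  refine nonempty_induce_iso_top_deleteEdges hS' hx hy hxy hnxy (fun a ha b hb hab hnab =>
    sym2_eq_of_not_adj_of_not_adj hS' hcov hx hy hxy hnxy ha hb hab hnab) ?_
  simp [Fin.ext_iff]
  omega

/-- Let `k ≥ 5` and let `G` be a graph with `m(G) < (k+1)/2` in which every
vertex and edge lies in a `k`-clique.  If `v` is a vertex of minimum degree,
then the subgraph `K(v)` induced on `{v} ∪ N(v)` is isomorphic to `K_k`,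
to `K_{k+1}` minus one edge, or to `K_{k+1}`. -/
theorem Kv_trichotomy {V : Type*} [Fintype V]
    (k : ℕ) (hk : 5 ≤ k) (G : SimpleGraph V) [DecidableRel G.Adj]
    (hm : ∀ J : G.Subgraph, J.verts.Nonempty →
      (J.edgeSet.ncard : ℝ) / (J.verts.ncard : ℝ) < ((k : ℝ) + 1) / 2)
    (hvtx : ∀ x : V, ∃ s : Finset V, G.IsNClique k s ∧ x ∈ s)
    (hedge : ∀ x y : V, G.Adj x y → ∃ s : Finset V, G.IsNClique k s ∧ x ∈ s ∧ y ∈ s)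
    (v : V) (hmin : ∀ u : V, G.degree v ≤ G.degree u) :
    Nonempty ((G.induce ({v} ∪ G.neighborSet v)) ≃g (⊤ : SimpleGraph (Fin k))) ∨
    Nonempty ((G.induce ({v} ∪ G.neighborSet v)) ≃g
      ((⊤ : SimpleGraph (Fin (k + 1))).deleteEdges {s(0, 1)})) ∨
    Nonempty ((G.induce ({v} ∪ G.neighborSet v)) ≃g (⊤ : SimpleGraph (Fin (k + 1)))) :=
  Kv_trichotomy_general k G hm hvtx hedge v hmin
end

section
/- Let k ≥ 5 and let G be a connected graph on at least k+1 vertices with m(G) < (k+1)/2 whose vertices and edges all lie in a single K_k-component. Let v be a minimum-degree vertex with K(v) = K_k (induced on {v} ∪ N(v)), and suppose R(v) has ℓ vertices. Then 1 ≤ ℓ ≤ k−2, R(v) is a complete graph K_ℓ, and S(v) (induced on V(K(v)) \ V(R(v))) is a complete graph K_{k−ℓ}. -/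
/-!
Since `K(v)` is a `k`-clique on `{v} ∪ N(v)`, it is the only `k`-clique through `v`, and both
`R(v) ⊆ K(v)` and `S(v) = K(v) \ R(v)` are complete. A `k`-clique avoiding `v` avoids `R(v)`, so it
meets `K(v)` only inside `S(v)`. If `S(v)` had at most one vertex, no `k`-clique could share an edge
with `K(v)` without passing through `v`, i.e. without being `K(v)`; then `K(v)` would be its own
`K_k`-component, contradicting that a vertex outside `K(v)` lies on some `k`-clique.
-/

theorem Relation.ReflTransGen.eq_of_forall_rel_eq {α : Type*} {r : α → α → Prop} {a b : α}
    (h : ∀ c, r a c → c = a) (hab : Relation.ReflTransGen r a b) : b = a := by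
  induction hab with
  | refl => rfl
  | tail _ hcd ih => subst ih; exact h _ hcd

namespace SimpleGraph

variable {V : Type*} {G : SimpleGraph V} {k : ℕ} {v : V}

/-- The set `R(v)` of the paper. -/
def anchoredSet (G : SimpleGraph V) (k : ℕ) (v : V) : Set V :=
  {v} ∪ {w : V | G.Adj v w ∧ ∀ s : Finset V, G.IsNClique k s → w ∈ s → v ∈ s}

lemma anchoredSet_subset : G.anchoredSet k v ⊆ {v} ∪ G.neighborSet v :=
  Set.union_subset_union_right _ fun _ hw => hw.1

lemma disjoint_anchoredSet {t : Finset V} (ht : G.IsNClique k t) (hvt : v ∉ t) :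
    Disjoint (t : Set V) (G.anchoredSet k v) := by
  refine Set.disjoint_left.mpr fun w hwt hwR => hvt ?_
  rcases hwR with rfl | ⟨_, hw⟩
  · exact hwt
  · exact hw t ht hwt

lemma IsClique.subset_insert_neighborSet {s : Set V} (hs : G.IsClique s) (hv : v ∈ s) :
    s ⊆ {v} ∪ G.neighborSet v := by
  intro w hw
  by_cases hwv : w = v
  · exact Or.inl hwv
  · exact Or.inr (hs hv hw (Ne.symm hwv))

lemma IsNClique.coe_eq_of_ncard_eq [Finite V] {s : Finset V} (hs : G.IsNClique k s) (hv : v ∈ s)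
    (hK : ({v} ∪ G.neighborSet v).ncard = k) : (s : Set V) = {v} ∪ G.neighborSet v :=
  Set.eq_of_subset_of_ncard_le (hs.isClique.subset_insert_neighborSet hv)
    (by rw [Set.ncard_coe_finset, hs.card_eq, hK]) (Set.toFinite _)

variable [DecidableEq V]

lemma IsNClique.coe_eq_of_two_le_card_inter [Finite V] {s t : Finset V}
    (hsK : (s : Set V) = {v} ∪ G.neighborSet v) (hK : ({v} ∪ G.neighborSet v).ncard = k)
    (hS : (({v} ∪ G.neighborSet v) \ G.anchoredSet k v).ncard ≤ 1)
    (ht : G.IsNClique k t) (hst : 2 ≤ (s ∩ t).card) :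
    (t : Set V) = {v} ∪ G.neighborSet v := by
  by_cases hvt : v ∈ t
  · exact ht.coe_eq_of_ncard_eq hvt hK
  have hsub : ((s ∩ t : Finset V) : Set V) ⊆ ({v} ∪ G.neighborSet v) \ G.anchoredSet k v := by
    rw [Finset.coe_inter, ← hsK]
    exact fun w ⟨hws, hwt⟩ => ⟨hws, Set.disjoint_left.mp (disjoint_anchoredSet ht hvt) hwt⟩
  have := Set.ncard_le_ncard hsub (Set.toFinite _)
  rw [Set.ncard_coe_finset] at this
  omega

lemma two_le_ncard_closedNbhd_diff_anchoredSet [Fintype V] (hcard : k + 1 ≤ Fintype.card V)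
    (hvtx : ∀ x : V, ∃ s : Finset V, G.IsNClique k s ∧ x ∈ s)
    (hcomp : ∀ s t : Finset V, G.IsNClique k s → G.IsNClique k t →
      Relation.ReflTransGen
        (fun a b : Finset V => G.IsNClique k a ∧ G.IsNClique k b ∧ 2 ≤ (a ∩ b).card) s t)
    (hK : ({v} ∪ G.neighborSet v).ncard = k) (hKc : G.IsClique ({v} ∪ G.neighborSet v)) :
    2 ≤ (({v} ∪ G.neighborSet v) \ G.anchoredSet k v).ncard := by
  by_contra! hS
  set F := (Set.toFinite ({v} ∪ G.neighborSet v)).toFinset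
  have hFK : (F : Set V) = {v} ∪ G.neighborSet v := Set.Finite.coe_toFinset _
  have hF : G.IsNClique k F := ⟨hFK ▸ hKc, by rw [← Set.ncard_coe_finset, hFK, hK]⟩
  obtain ⟨x, hxK⟩ : ∃ x, x ∉ ({v} ∪ G.neighborSet v) := by
    by_contra! h
    rw [Set.eq_univ_of_forall h, Set.ncard_univ, Nat.card_eq_fintype_card] at hK
    omega
  obtain ⟨t, ht, hxt⟩ := hvtx x
  have htF : t = F := (hcomp F t hF ht).eq_of_forall_rel_eq fun c ⟨_, hc, hFc⟩ =>
    Finset.coe_injective ((hc.coe_eq_of_two_le_card_inter hFK hK (by omega) hFc).trans hFK.symm)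
  exact hxK (hFK ▸ htF ▸ hxt)

end SimpleGraph

theorem config_X_general {V : Type*} [Fintype V] [DecidableEq V]
    (k : ℕ) (G : SimpleGraph V)
    (hcard : k + 1 ≤ Fintype.card V)
    (hvtx : ∀ x : V, ∃ s : Finset V, G.IsNClique k s ∧ x ∈ s)
    (hcomp : ∀ s t : Finset V, G.IsNClique k s → G.IsNClique k t →
      Relation.ReflTransGen
        (fun a b : Finset V => G.IsNClique k a ∧ G.IsNClique k b ∧ 2 ≤ (a ∩ b).card) s t)
    (v : V)
    (Kv Rv : Set V)
    (hKv : Kv = {v} ∪ G.neighborSet v)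
    (hRv : Rv = {v} ∪ {w : V | G.Adj v w ∧
        ∀ s : Finset V, G.IsNClique k s → w ∈ s → v ∈ s})
    (hKvk : Kv.ncard = k ∧ ∀ x ∈ Kv, ∀ y ∈ Kv, x ≠ y → G.Adj x y) :
    (1 ≤ Rv.ncard ∧ Rv.ncard ≤ k - 2) ∧
    (∀ x ∈ Rv, ∀ y ∈ Rv, x ≠ y → G.Adj x y) ∧
    ((Kv \ Rv).ncard = k - Rv.ncard ∧
      ∀ x ∈ Kv \ Rv, ∀ y ∈ Kv \ Rv, x ≠ y → G.Adj x y) := by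
  obtain rfl : Rv = G.anchoredSet k v := hRv
  subst hKv
  obtain ⟨hK, hKc⟩ := hKvk
  have hRK : G.anchoredSet k v ⊆ {v} ∪ G.neighborSet v := SimpleGraph.anchoredSet_subset
  have hS := SimpleGraph.two_le_ncard_closedNbhd_diff_anchoredSet hcard hvtx hcomp hK hKc
  have hSR :
      (({v} ∪ G.neighborSet v) \ G.anchoredSet k v).ncard = k - (G.anchoredSet k v).ncard := by
    rw [Set.ncard_sdiff hRK, hK]
  have hR : 1 ≤ (G.anchoredSet k v).ncard := (Set.ncard_pos).mpr ⟨v, Or.inl rfl⟩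
  exact ⟨⟨hR, by omega⟩, fun x hx y hy => hKc _ (hRK hx) _ (hRK hy), hSR,
    fun x hx y hy => hKc _ hx.1 _ hy.1⟩

/-- Configuration `X_ℓ`: let `k ≥ 5` and let `G` be a connected graph on at least
`k+1` vertices with `m(G) < (k+1)/2` whose vertices and edges all lie in a single
`K_k`-component.  If `v` is a minimum-degree vertex with `K(v) = K_k`
(the induced subgraph on `{v} ∪ N(v)` is a complete graph on `k` vertices),
and `R(v)` has `ℓ` vertices, then `1 ≤ ℓ ≤ k-2`, `R(v)` is a complete graph
`K_ℓ`, and `S(v) = K(v) \ R(v)` is a complete graph `K_{k-ℓ}`. -/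
theorem config_X {V : Type*} [Fintype V] [DecidableEq V]
    (k : ℕ) (hk : 5 ≤ k) (G : SimpleGraph V) [DecidableRel G.Adj]
    (hconn : G.Connected)
    (hcard : k + 1 ≤ Fintype.card V)
    (hm : ∀ J : G.Subgraph, J.verts.Nonempty →
      (J.edgeSet.ncard : ℝ) / (J.verts.ncard : ℝ) < ((k : ℝ) + 1) / 2)
    (hvtx : ∀ x : V, ∃ s : Finset V, G.IsNClique k s ∧ x ∈ s)
    (hedge : ∀ x y : V, G.Adj x y → ∃ s : Finset V, G.IsNClique k s ∧ x ∈ s ∧ y ∈ s)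
    (hcomp : ∀ s t : Finset V, G.IsNClique k s → G.IsNClique k t →
      Relation.ReflTransGen
        (fun a b : Finset V => G.IsNClique k a ∧ G.IsNClique k b ∧ 2 ≤ (a ∩ b).card) s t)
    (v : V) (hmin : ∀ u : V, G.degree v ≤ G.degree u)
    (Kv Rv : Set V)
    (hKv : Kv = {v} ∪ G.neighborSet v)
    (hRv : Rv = {v} ∪ {w : V | G.Adj v w ∧
        ∀ s : Finset V, G.IsNClique k s → w ∈ s → v ∈ s})
    (hKvk : Kv.ncard = k ∧ ∀ x ∈ Kv, ∀ y ∈ Kv, x ≠ y → G.Adj x y) :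
    (1 ≤ Rv.ncard ∧ Rv.ncard ≤ k - 2) ∧
    (∀ x ∈ Rv, ∀ y ∈ Rv, x ≠ y → G.Adj x y) ∧
    ((Kv \ Rv).ncard = k - Rv.ncard ∧
      ∀ x ∈ Kv \ Rv, ∀ y ∈ Kv \ Rv, x ≠ y → G.Adj x y) :=
  config_X_general k G hcard hvtx hcomp v Kv Rv hKv hRv hKvk
end

section
/- Let k ≥ 5 and let G be a connected graph on at least k+1 vertices with m(G) < (k+1)/2 whose vertices and edges all lie in a single K_k-component. Let v be a minimum-degree vertex with K(v) = K_{k+1}^- (complete graph on k+1 vertices minus one edge) and suppose R(v) has ℓ vertices. Then R(v) is a complete graph K_ℓ and S(v) is a copy of K_{k−ℓ+1}^-; in particular the unique missing edge of K(v) has both endpoints in S(v). -/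
/-!
If a vertex `a` of `R(v)` had a non-neighbour `b ≠ a` in `K(v)`, then, since every edge at `a`
lies in a `k`-clique and every `k`-clique through `a` contains `v`, all neighbours of `a` would
lie in `K(v) \ {a, b}`, so `deg a ≤ deg v - 1`, against the minimality of `deg v`. Hence `R(v)`
avoids both ends of the missing edge of `K(v) = K_{k+1}^-`, and the rest is counting.
-/

namespace SimpleGraph

variable {V : Type*} {G : SimpleGraph V} {k : ℕ} {v w b : V}

theorem neighborSet_subset_insert_of_forall_isNClique_mem
    (hedge : ∀ z, G.Adj w z → ∃ s : Finset V, G.IsNClique k s ∧ w ∈ s ∧ z ∈ s)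
    (hall : ∀ s : Finset V, G.IsNClique k s → w ∈ s → v ∈ s) :
    G.neighborSet w ⊆ insert v (G.neighborSet v) := by
  intro z hz
  obtain ⟨s, hs, hws, hzs⟩ := hedge z hz
  obtain rfl | hzv := eq_or_ne z v
  · exact Set.mem_insert z _
  · exact Set.mem_insert_of_mem _ (hs.isClique (hall s hs hws) hzs hzv.symm)

variable [Fintype V] [DecidableRel G.Adj]

theorem degree_lt_of_neighborSet_subset_insert
    (hsub : G.neighborSet w ⊆ insert v (G.neighborSet v))
    (hw : w ∈ insert v (G.neighborSet v)) (hb : b ∈ insert v (G.neighborSet v))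
    (hwb : w ≠ b) (hnadj : ¬ G.Adj w b) :
    G.degree w < G.degree v := by
  classical
  set K := insert v (G.neighborFinset v)
  have hwK : w ∈ K := by simpa [K] using hw
  have hbK : b ∈ K := by simpa [K] using hb
  have hsub' : G.neighborFinset w ⊆ (K.erase w).erase b := by
    intro z hz
    rw [mem_neighborFinset] at hz
    refine Finset.mem_erase.2 ⟨?_, Finset.mem_erase.2 ⟨(G.ne_of_adj hz).symm, ?_⟩⟩
    · rintro rfl; exact hnadj hz
    · simpa [K] using hsub hz
  have hcard := Finset.card_le_card hsub'
  rw [Finset.card_erase_of_mem (Finset.mem_erase.2 ⟨hwb.symm, hbK⟩),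
    Finset.card_erase_of_mem hwK, card_neighborFinset_eq_degree] at hcard
  have hK : K.card ≤ G.degree v + 1 := by
    simpa only [K, card_neighborFinset_eq_degree] using Finset.card_insert_le v (G.neighborFinset v)
  have hK2 : 2 ≤ K.card :=
    Finset.one_lt_card.2 ⟨w, hwK, b, hbK, hwb⟩
  omega

theorem exists_isNClique_not_mem_of_not_adj (hmin : ∀ u, G.degree v ≤ G.degree u)
    (hedge : ∀ z, G.Adj w z → ∃ s : Finset V, G.IsNClique k s ∧ w ∈ s ∧ z ∈ s)
    (hw : w ∈ insert v (G.neighborSet v)) (hb : b ∈ insert v (G.neighborSet v))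
    (hwb : w ≠ b) (hnadj : ¬ G.Adj w b) :
    ∃ s : Finset V, G.IsNClique k s ∧ w ∈ s ∧ v ∉ s := by
  by_contra! hall
  exact (degree_lt_of_neighborSet_subset_insert
    (neighborSet_subset_insert_of_forall_isNClique_mem hedge hall) hw hb hwb hnadj).not_ge (hmin w)

end SimpleGraph

open SimpleGraph

theorem config_Y_general {V : Type*} [Fintype V]
    (k : ℕ) (G : SimpleGraph V) [DecidableRel G.Adj]
    (hedge : ∀ x y : V, G.Adj x y → ∃ s : Finset V, G.IsNClique k s ∧ x ∈ s ∧ y ∈ s)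
    (v : V) (hmin : ∀ u : V, G.degree v ≤ G.degree u)
    (Kv Rv : Set V)
    (hKv : Kv = {v} ∪ G.neighborSet v)
    (hRv : Rv = {v} ∪ {w : V | G.Adj v w ∧
        ∀ s : Finset V, G.IsNClique k s → w ∈ s → v ∈ s})
    (hKvcard : Kv.ncard = k + 1)
    (x y : V) (hx : x ∈ Kv) (hy : y ∈ Kv) (hxy : x ≠ y) (hnadj : ¬ G.Adj x y)
    (hrest : ∀ a ∈ Kv, ∀ b ∈ Kv, a ≠ b → ({a, b} : Set V) ≠ {x, y} → G.Adj a b) :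
    (∀ a ∈ Rv, ∀ b ∈ Rv, a ≠ b → G.Adj a b) ∧
    (Kv \ Rv).ncard = k - Rv.ncard + 1 ∧
    (x ∈ Kv \ Rv ∧ y ∈ Kv \ Rv) ∧
    (∀ a ∈ Kv \ Rv, ∀ b ∈ Kv \ Rv, a ≠ b → ¬ G.Adj a b →
      (a = x ∧ b = y) ∨ (a = y ∧ b = x)) := by
  rw [Set.singleton_union] at hKv hRv
  have hRK : Rv ⊆ Kv := hRv ▸ hKv ▸ Set.insert_subset_insert fun _ hw => hw.1
  have hnotR : ∀ a ∈ Kv, ∀ b ∈ Kv, a ≠ b → ¬ G.Adj a b → a ∉ Rv := by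
    rintro a ha b hb hab hnab haR
    subst hKv
    obtain ⟨s, hs, has, hvs⟩ := exists_isNClique_not_mem_of_not_adj hmin (hedge a) ha hb hab hnab
    rw [hRv] at haR
    rcases haR with rfl | ⟨-, hall⟩
    exacts [hvs has, hvs (hall s hs has)]
  have hxR := hnotR x hx y hy hxy hnadj
  have hyR := hnotR y hy x hx hxy.symm fun h => hnadj h.symm
  have hRcard : Rv.ncard < k + 1 :=
    hKvcard ▸ Set.ncard_lt_ncard ((Set.ssubset_iff_of_subset hRK).2 ⟨x, hx, hxR⟩)
  refine ⟨?_, ?_, ⟨⟨hx, hxR⟩, ⟨hy, hyR⟩⟩, ?_⟩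
  · intro a ha b hb hab
    refine hrest a (hRK ha) b (hRK hb) hab fun hpair => ?_
    rcases Set.pair_eq_pair_iff.1 hpair with ⟨rfl, -⟩ | ⟨rfl, -⟩
    exacts [hxR ha, hyR ha]
  · rw [Set.ncard_sdiff hRK, hKvcard]
    omega
  · intro a ha b hb hab hnab
    by_contra hne
    exact hnab (hrest a ha.1 b hb.1 hab (hne ∘ Set.pair_eq_pair_iff.1))

/-- Configuration `Y_ℓ`: let `k ≥ 5` and let `G` be a connected graph on at least
`k+1` vertices with `m(G) < (k+1)/2` whose vertices and edges all lie in a single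
`K_k`-component.  Suppose `v` is a minimum-degree vertex with
`K(v) = K_{k+1}^-`, i.e. the induced subgraph on `{v} ∪ N(v)` has `k+1`
vertices and all pairs are adjacent except for the single pair `{x, y}`.
If `R(v)` has `ℓ` vertices, then `R(v)` is a complete graph `K_ℓ` and
`S(v) = K(v) \ R(v)` is a copy of `K_{k-ℓ+1}^-`; in particular the unique missing
edge of `K(v)` has both endpoints `x, y` in `S(v)`. -/
theorem config_Y {V : Type*} [Fintype V] [DecidableEq V]
    (k : ℕ) (hk : 5 ≤ k) (G : SimpleGraph V) [DecidableRel G.Adj]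
    (hconn : G.Connected)
    (hcard : k + 1 ≤ Fintype.card V)
    (hm : ∀ J : G.Subgraph, J.verts.Nonempty →
      (J.edgeSet.ncard : ℝ) / (J.verts.ncard : ℝ) < ((k : ℝ) + 1) / 2)
    (hvtx : ∀ x : V, ∃ s : Finset V, G.IsNClique k s ∧ x ∈ s)
    (hedge : ∀ x y : V, G.Adj x y → ∃ s : Finset V, G.IsNClique k s ∧ x ∈ s ∧ y ∈ s)
    (hcomp : ∀ s t : Finset V, G.IsNClique k s → G.IsNClique k t →
      Relation.ReflTransGen
        (fun a b : Finset V => G.IsNClique k a ∧ G.IsNClique k b ∧ 2 ≤ (a ∩ b).card) s t)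
    (v : V) (hmin : ∀ u : V, G.degree v ≤ G.degree u)
    (Kv Rv : Set V)
    (hKv : Kv = {v} ∪ G.neighborSet v)
    (hRv : Rv = {v} ∪ {w : V | G.Adj v w ∧
        ∀ s : Finset V, G.IsNClique k s → w ∈ s → v ∈ s})
    (hKvcard : Kv.ncard = k + 1)
    (x y : V) (hx : x ∈ Kv) (hy : y ∈ Kv) (hxy : x ≠ y) (hnadj : ¬ G.Adj x y)
    (hrest : ∀ a ∈ Kv, ∀ b ∈ Kv, a ≠ b → ({a, b} : Set V) ≠ {x, y} → G.Adj a b) :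
    (∀ a ∈ Rv, ∀ b ∈ Rv, a ≠ b → G.Adj a b) ∧
    (Kv \ Rv).ncard = k - Rv.ncard + 1 ∧
    (x ∈ Kv \ Rv ∧ y ∈ Kv \ Rv) ∧
    (∀ a ∈ Kv \ Rv, ∀ b ∈ Kv \ Rv, a ≠ b → ¬ G.Adj a b →
      (a = x ∧ b = y) ∨ (a = y ∧ b = x)) :=
  config_Y_general k G hedge v hmin Kv Rv hKv hRv hKvcard x y hx hy hxy hnadj hrest
end

section
/- In any proper edge-colouring of a graph in which every set of four vertices spans at most four coloured edges, any set of five or more vertices contains two disjoint uncoloured edges among its induced complete graph edges (assuming the five vertices induce a complete graph K_5). -/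
/-!
Every four of the five vertices span at least two uncoloured edges, since a `K_4` has six edges
and at most four are coloured. If the uncoloured edges pairwise met, the two avoiding some vertex
would share a vertex `w`, say they are `wx` and `wy`; the two uncoloured edges avoiding `w` would
then both have to meet `wx` and `wy` away from `w`, so both would be `xy`.
-/

namespace Sym2

variable {α : Type*}

theorem eq_of_meets_of_notMem {w x y : α} {e : Sym2 α} (hxy : x ≠ y) (hw : w ∉ e)
    (hx : ∃ a ∈ e, a ∈ s(w, x)) (hy : ∃ a ∈ e, a ∈ s(w, y)) : e = s(x, y) := by
  obtain ⟨a, ha, hax⟩ := hx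
  obtain ⟨b, hb, hby⟩ := hy
  rw [mem_iff] at hax hby
  rcases hax with rfl | rfl
  · exact absurd ha hw
  rcases hby with rfl | rfl
  · exact absurd hb hw
  exact (mem_and_mem_iff hxy).1 ⟨ha, hb⟩

theorem exists_disjoint_of_forall_exists_two_notMem [Nonempty α] {F : Set (Sym2 α)}
    (h : ∀ v, ∃ e₁ ∈ F, ∃ e₂ ∈ F, e₁ ≠ e₂ ∧ v ∉ e₁ ∧ v ∉ e₂) :
    ∃ e₁ ∈ F, ∃ e₂ ∈ F, ∀ x ∈ e₁, x ∉ e₂ := by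
  obtain ⟨e₁, h₁, e₂, h₂, h₁₂, -, -⟩ := h (Classical.arbitrary α)
  by_contra! hF
  obtain ⟨w, hw₁, hw₂⟩ := hF e₁ h₁ e₂ h₂
  obtain ⟨x, rfl⟩ := mem_iff_exists.1 hw₁
  obtain ⟨y, rfl⟩ := mem_iff_exists.1 hw₂
  have hxy : x ≠ y := by rintro rfl; exact h₁₂ rfl
  obtain ⟨e₃, h₃, e₄, h₄, h₃₄, hw₃, hw₄⟩ := h w
  have he₃ := eq_of_meets_of_notMem hxy hw₃ (hF e₃ h₃ _ h₁) (hF e₃ h₃ _ h₂)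
  have he₄ := eq_of_meets_of_notMem hxy hw₄ (hF e₄ h₄ _ h₁) (hF e₄ h₄ _ h₂)
  exact h₃₄ (he₃.trans he₄.symm)

end Sym2

namespace SimpleGraph

variable {V : Type*} {G : SimpleGraph V}

theorem IsNClique.ncard_edges_inside {n : ℕ} {s : Finset V} (hs : G.IsNClique n s) :
    {e : Sym2 V | e ∈ G.edgeSet ∧ ∀ x ∈ e, x ∈ s}.ncard = n.choose 2 := by
  classical
  have : {e : Sym2 V | e ∈ G.edgeSet ∧ ∀ x ∈ e, x ∈ s} = ↑(s.offDiag.image Sym2.mk.uncurry) := by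
    ext e
    induction e using Sym2.ind with
    | h a b =>
      simp only [Set.mem_ofPred_eq, mem_edgeSet, Sym2.mem_iff, forall_eq_or_imp, forall_eq,
        Finset.coe_image, Finset.coe_offDiag, Set.mem_image, Set.mem_offDiag, Prod.exists,
        Function.uncurry_apply_pair, Sym2.eq_iff]
      constructor
      · rintro ⟨hab, ha, hb⟩
        exact ⟨a, b, ⟨ha, hb, hab.ne⟩, Or.inl ⟨rfl, rfl⟩⟩
      · rintro ⟨x, y, ⟨hx, hy, hxy⟩, ⟨rfl, rfl⟩ | ⟨rfl, rfl⟩⟩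
        · exact ⟨hs.isClique hx hy hxy, hx, hy⟩
        · exact ⟨hs.isClique hy hx (Ne.symm hxy), hy, hx⟩
  rw [this, Set.ncard_coe_finset, Sym2.card_image_offDiag, hs.card_eq]

variable {C : Type*}

def uncolouredEdgesIn (G : SimpleGraph V) (c : Sym2 V → Option C) (s : Finset V) :
    Set (Sym2 V) :=
  {e | e ∈ G.edgeSet ∧ (∀ x ∈ e, x ∈ s) ∧ c e = none}

theorem uncolouredEdgesIn_mono (c : Sym2 V → Option C) {s t : Finset V} (hst : s ⊆ t) :
    uncolouredEdgesIn G c s ⊆ uncolouredEdgesIn G c t :=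
  fun _ ⟨he, hs, hc⟩ ↦ ⟨he, fun x hx ↦ hst (hs x hx), hc⟩

theorem finite_setOf_forall_mem_finset (s : Finset V) : {e : Sym2 V | ∀ x ∈ e, x ∈ s}.Finite :=
  s.sym2.finite_toSet.subset fun _ he ↦ Finset.mem_sym2_iff.2 he

theorem IsNClique.choose_two_le_ncard_add_ncard_uncolouredEdgesIn
    (c : Sym2 V → Option C) {n : ℕ} {s : Finset V} (hs : G.IsNClique n s) :
    n.choose 2 ≤ {e | e ∈ G.edgeSet ∧ (∀ x ∈ e, x ∈ s) ∧ (c e).isSome}.ncard +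
      (uncolouredEdgesIn G c s).ncard := by
  rw [← hs.ncard_edges_inside]
  refine (Set.ncard_le_ncard ?_ ((finite_setOf_forall_mem_finset s).subset
    (Set.union_subset (fun _ he ↦ he.2.1) (fun _ he ↦ he.2.1)))).trans (Set.ncard_union_le _ _)
  rintro e ⟨he, hs⟩
  cases hc : c e
  · exact Or.inr ⟨he, hs, hc⟩
  · exact Or.inl ⟨he, hs, by simp [hc]⟩

theorem exists_two_uncolouredEdgesIn_notMem {c : Sym2 V → Option C}
    (h4 : ∀ t : Finset V, t.card = 4 →
      {e : Sym2 V | e ∈ G.edgeSet ∧ (∀ x ∈ e, x ∈ t) ∧ (c e).isSome}.ncard ≤ 4)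
    {t : Finset V} (ht : G.IsClique t) (ht5 : 5 ≤ t.card) (v : V) :
    ∃ e₁ ∈ uncolouredEdgesIn G c t, ∃ e₂ ∈ uncolouredEdgesIn G c t,
      e₁ ≠ e₂ ∧ v ∉ e₁ ∧ v ∉ e₂ := by
  classical
  obtain ⟨s, hst, hs4⟩ := Finset.exists_subset_card_eq (s := t.erase v) (n := 4)
    (by have := Finset.pred_card_le_card_erase (s := t) (a := v); omega)
  have hs : G.IsNClique 4 s := ⟨ht.subset (by simpa using hst.trans (t.erase_subset v)), hs4⟩
  have hsize := hs.choose_two_le_ncard_add_ncard_uncolouredEdgesIn c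
  have hcol := h4 s hs4
  have hchoose : Nat.choose 4 2 = 6 := rfl
  obtain ⟨e₁, h₁, e₂, h₂, h₁₂⟩ := (Set.one_lt_ncard
    ((finite_setOf_forall_mem_finset s).subset fun _ he ↦ he.2.1)).1
    (show 1 < (uncolouredEdgesIn G c s).ncard by omega)
  have hv : ∀ e ∈ uncolouredEdgesIn G c s, v ∉ e := fun e he hve ↦
    (Finset.mem_erase.1 (hst (he.2.1 v hve))).1 rfl
  have hsub := uncolouredEdgesIn_mono (G := G) c (hst.trans (t.erase_subset v))
  exact ⟨e₁, hsub h₁, e₂, hsub h₂, h₁₂, hv e₁ h₁, hv e₂ h₂⟩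

end SimpleGraph

theorem two_disjoint_uncoloured_edges_general {V : Type*}
    {C : Type*} (G : SimpleGraph V) (c : Sym2 V → Option C)
    (h4 : ∀ t : Finset V, t.card = 4 →
      {e : Sym2 V | e ∈ G.edgeSet ∧ (∀ x ∈ e, x ∈ t) ∧ (c e).isSome}.ncard ≤ 4)
    (t : Finset V) (ht : G.IsNClique 5 t) :
    ∃ a ∈ t, ∃ b ∈ t, ∃ x ∈ t, ∃ y ∈ t,
      G.Adj a b ∧ G.Adj x y ∧ a ≠ x ∧ a ≠ y ∧ b ≠ x ∧ b ≠ y ∧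
      c s(a, b) = none ∧ c s(x, y) = none := by
  obtain ⟨v, -⟩ := t.card_pos.1 (by simp [ht.card_eq])
  have : Nonempty V := ⟨v⟩
  obtain ⟨e₁, h₁, e₂, h₂, hdisj⟩ := Sym2.exists_disjoint_of_forall_exists_two_notMem
    (SimpleGraph.exists_two_uncolouredEdgesIn_notMem h4 ht.isClique ht.card_eq.ge)
  induction e₁ using Sym2.ind with | h a b =>
  induction e₂ using Sym2.ind with | h x y =>
  obtain ⟨hab, habt, hcab⟩ := h₁
  obtain ⟨hxy, hxyt, hcxy⟩ := h₂
  simp only [Sym2.mem_iff, forall_eq_or_imp, forall_eq, not_or] at hdisj habt hxyt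
  exact ⟨a, habt.1, b, habt.2, x, hxyt.1, y, hxyt.2, hab, hxy, hdisj.1.1, hdisj.1.2,
    hdisj.2.1, hdisj.2.2, hcab, hcxy⟩

/-- In any partial proper edge-colouring of a graph in which every set of four
vertices spans at most four coloured edges, any set of five vertices inducing a
`K_5` contains two vertex-disjoint uncoloured edges. -/
theorem two_disjoint_uncoloured_edges {V : Type*} [Fintype V] [DecidableEq V]
    {C : Type*} (G : SimpleGraph V) (c : Sym2 V → Option C)
    (hproper : ∀ e₁ ∈ G.edgeSet, ∀ e₂ ∈ G.edgeSet, e₁ ≠ e₂ →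
      (∃ x, x ∈ e₁ ∧ x ∈ e₂) → (c e₁).isSome → (c e₂).isSome → c e₁ ≠ c e₂)
    (h4 : ∀ t : Finset V, t.card = 4 →
      {e : Sym2 V | e ∈ G.edgeSet ∧ (∀ x ∈ e, x ∈ t) ∧ (c e).isSome}.ncard ≤ 4)
    (t : Finset V) (ht : G.IsNClique 5 t) :
    ∃ a ∈ t, ∃ b ∈ t, ∃ x ∈ t, ∃ y ∈ t,
      G.Adj a b ∧ G.Adj x y ∧ a ≠ x ∧ a ≠ y ∧ b ≠ x ∧ b ≠ y ∧
      c s(a, b) = none ∧ c s(x, y) = none :=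
  two_disjoint_uncoloured_edges_general G c h4 t ht
end

section
/- Let J be the graph obtained from the complete bipartite graph K_{3,4} with parts {a,b,c} and {w,x,y,z} by adding the three edges ab, ac, bc. Then in every proper edge-colouring of J there exists a rainbow copy of K_4, i.e., a 4-clique whose six edges receive six distinct colours. -/
/-!
Each outer vertex `v ∈ {w, x, y, z}` spans a `K_4` with the triangle `abc`. In a proper colouring two
distinct edges of that `K_4` can only share a colour if they are opposite, i.e. `va` and `bc`,
`vb` and `ac`, or `vc` and `ab`. At `a`, the colour of `bc` occurs on at most one edge `va`, and
likewise at `b` and `c`, so at most three outer vertices are spoiled and the fourth gives a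
rainbow `K_4`.
-/

/-- The graph `J` obtained from `K_{3,4}` with parts `{a,b,c} = {0,1,2}` and
`{w,x,y,z} = {3,4,5,6}` by adding the triangle `abc`: two vertices are adjacent
iff they are distinct and at least one of them lies in `{0,1,2}`. -/
def Jgraph : SimpleGraph (Fin 7) :=
  SimpleGraph.fromRel (fun x _ => x.val < 3)

namespace SimpleGraph

variable {V α : Type*} (G : SimpleGraph V)

def IsProperEdgeColoring (c : Sym2 V → α) : Prop :=
  ∀ e₁ ∈ G.edgeSet, ∀ e₂ ∈ G.edgeSet, e₁ ≠ e₂ → (∃ x, x ∈ e₁ ∧ x ∈ e₂) → c e₁ ≠ c e₂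

def IsRainbowOn (c : Sym2 V → α) (t : Finset V) : Prop :=
  ∀ e₁ ∈ G.edgeSet, ∀ e₂ ∈ G.edgeSet,
    (∀ x ∈ e₁, x ∈ t) → (∀ x ∈ e₂, x ∈ t) → e₁ ≠ e₂ → c e₁ ≠ c e₂

variable {G} {c : Sym2 V → α}

namespace IsProperEdgeColoring

theorem injOn_neighborSet (hc : G.IsProperEdgeColoring c) (v : V) :
    Set.InjOn (fun u => c s(u, v)) (G.neighborSet v) := by
  intro u hu w hw huw
  by_contra hne
  exact hc _ (G.mem_edgeSet.2 (G.adj_symm hu)) _ (G.mem_edgeSet.2 (G.adj_symm hw))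
    (mt Sym2.congr_left.1 hne) ⟨v, Sym2.mem_mk_right _ _, Sym2.mem_mk_right _ _⟩ huw

theorem card_filter_colour_eq_le_one [DecidableEq α] (hc : G.IsProperEdgeColoring c) {v : V}
    {s : Finset V} (hs : ∀ u ∈ s, G.Adj u v) (k : α) :
    (s.filter fun u => c s(u, v) = k).card ≤ 1 := by
  refine Finset.card_le_one.2 fun u hu w hw => ?_
  rw [Finset.mem_filter] at hu hw
  exact hc.injOn_neighborSet v (G.adj_symm (hs u hu.1)) (G.adj_symm (hs w hw.1))
    (hu.2.trans hw.2.symm)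

theorem exists_colour_ne_of_three_lt_card [DecidableEq V] [DecidableEq α]
    (hc : G.IsProperEdgeColoring c) {s : Finset V} (hs : 3 < s.card) {a b d : V}
    (hadj : ∀ u ∈ s, G.Adj u a ∧ G.Adj u b ∧ G.Adj u d) (ka kb kd : α) :
    ∃ v ∈ s, c s(v, a) ≠ ka ∧ c s(v, b) ≠ kb ∧ c s(v, d) ≠ kd := by
  set bad := (s.filter fun u => c s(u, a) = ka) ∪ (s.filter fun u => c s(u, b) = kb) ∪
    (s.filter fun u => c s(u, d) = kd)
  have hbad : bad.card < s.card := by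
    have ha := hc.card_filter_colour_eq_le_one (fun u hu => (hadj u hu).1) ka
    have hb := hc.card_filter_colour_eq_le_one (fun u hu => (hadj u hu).2.1) kb
    have hd := hc.card_filter_colour_eq_le_one (fun u hu => (hadj u hu).2.2) kd
    grw [Finset.card_union_le, Finset.card_union_le]
    omega
  obtain ⟨v, hvs, hvbad⟩ := Finset.exists_mem_notMem_of_card_lt_card hbad
  simp only [bad, Finset.mem_union, Finset.mem_filter, hvs, true_and, not_or] at hvbad
  exact ⟨v, hvs, hvbad.1.1, hvbad.1.2, hvbad.2⟩

theorem isRainbowOn_of_opposite_ne [DecidableEq V] (hc : G.IsProperEdgeColoring c)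
    {a b d v : V} (hva : c s(v, a) ≠ c s(b, d)) (hvb : c s(v, b) ≠ c s(a, d))
    (hvd : c s(v, d) ≠ c s(a, b)) : G.IsRainbowOn c {a, b, d, v} := by
  intro e₁ he₁ e₂ he₂ ht₁ ht₂ hne
  by_cases hshare : ∃ x, x ∈ e₁ ∧ x ∈ e₂
  · exact hc e₁ he₁ e₂ he₂ hne hshare
  induction e₁ using Sym2.ind with | _ p q => ?_
  induction e₂ using Sym2.ind with | _ r s => ?_
  have hpq : p ≠ q := G.ne_of_adj he₁
  have hrs : r ≠ s := G.ne_of_adj he₂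
  simp only [Sym2.mem_iff, not_exists, not_and, forall_eq_or_imp, forall_eq,
    Finset.mem_insert, Finset.mem_singleton] at hshare ht₁ ht₂
  obtain ⟨hp, hq⟩ := ht₁
  obtain ⟨hr, hs⟩ := ht₂
  rcases hp with rfl | rfl | rfl | rfl <;> rcases hq with rfl | rfl | rfl | rfl <;>
    rcases hr with rfl | rfl | rfl | rfl <;> rcases hs with rfl | rfl | rfl | rfl <;>
    simp_all [Sym2.eq_swap, eq_comm]

end IsProperEdgeColoring

end SimpleGraph

/-- In every proper edge-colouring of `J` there is a rainbow `K_4`: a 4-clique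
whose six edges receive pairwise distinct colours. -/
theorem Jgraph_rainbow_K4 (c : Sym2 (Fin 7) → ℕ)
    (hproper : ∀ e₁ ∈ Jgraph.edgeSet, ∀ e₂ ∈ Jgraph.edgeSet, e₁ ≠ e₂ →
      (∃ x, x ∈ e₁ ∧ x ∈ e₂) → c e₁ ≠ c e₂) :
    ∃ t : Finset (Fin 7), Jgraph.IsNClique 4 t ∧
      ∀ e₁ ∈ Jgraph.edgeSet, ∀ e₂ ∈ Jgraph.edgeSet,
        (∀ x ∈ e₁, x ∈ t) → (∀ x ∈ e₂, x ∈ t) → e₁ ≠ e₂ → c e₁ ≠ c e₂ := by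
  have hc : Jgraph.IsProperEdgeColoring c := hproper
  have hadj : ∀ u ∈ ({3, 4, 5, 6} : Finset (Fin 7)),
      Jgraph.Adj u 0 ∧ Jgraph.Adj u 1 ∧ Jgraph.Adj u 2 := by
    unfold Jgraph; decide
  have hclique : ∀ v ∈ ({3, 4, 5, 6} : Finset (Fin 7)), Jgraph.IsNClique 4 {0, 1, 2, v} := by
    unfold Jgraph; decide
  obtain ⟨v, hv, h0, h1, h2⟩ := hc.exists_colour_ne_of_three_lt_card (by decide) hadj
    (c s(1, 2)) (c s(0, 2)) (c s(0, 1))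
  exact ⟨{0, 1, 2, v}, hclique v hv, hc.isRainbowOn_of_opposite_ne h0 h1 h2⟩
end

section
/- Every finite graph G with maximum density m(G) < 15/7 in which every vertex and edge lies in a 4-clique, and whose 4-cliques form a single K_4-component, has at most 10 vertices. -/
/-!
Grow the union of the 4-cliques one clique at a time, each new clique sharing at least two
vertices with a clique already taken. A clique meeting the current union in `k ≥ 2` vertices adds
`4 - k` vertices and at least `6 - k(k-1)/2` edges, so `5 v ≤ 2 e + 8` holds at every stage,
starting from `K_4` itself. For the whole graph `7 e < 15 v` by the density bound, hence
`5 v < 56`, and `v = 11` is excluded because it would need `24 ≤ e < 165/7`.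
-/

open Finset SimpleGraph

theorem Relation.ReflTransGen.exists_mem_notMem {α : Type*} {r : α → α → Prop} {S : Set α}
    {x y : α} (h : Relation.ReflTransGen r x y) (hx : x ∈ S) (hy : y ∉ S) :
    ∃ a ∈ S, ∃ b ∉ S, r a b := by
  induction h with
  | refl => exact absurd hx hy
  | @tail b c _ hbc ih =>
    by_cases hb : b ∈ S
    · exact ⟨b, hb, c, hy, hbc⟩
    · exact ih hb

namespace Finset

variable {α : Type*} [DecidableEq α]

/-- The new `r`-set meets `U` in `k ≥ 2` points: it adds `r - k` points and at least
`(r - k)(r + k - 1) ≥ (r - k)(r + 1)` ordered pairs. -/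
theorem add_one_mul_card_union_le {r : ℕ} {s U : Finset α} {P : Finset (α × α)}
    (hs : #s = r) (hsU : 2 ≤ #(s ∩ U)) (hPU : P ⊆ U ×ˢ U)
    (hP : (r + 1) * #U ≤ #P + 2 * r) :
    (r + 1) * #(s ∪ U) ≤ #(s.offDiag ∪ P) + 2 * r := by
  have hverts := card_union_add_card_inter s U
  have hpairs := card_union_add_card_inter s.offDiag P
  have hold : #(s.offDiag ∩ P) ≤ #(s ∩ U).offDiag := by
    refine card_le_card fun p hp => ?_
    obtain ⟨hps, hpP⟩ := mem_inter.1 hp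
    have := mem_product.1 (hPU hpP)
    simp only [mem_offDiag, mem_inter] at hps ⊢
    tauto
  have hk : #(s ∩ U) ≤ r := hs ▸ card_le_card inter_subset_left
  rw [offDiag_card, hs] at hpairs
  rw [offDiag_card] at hold
  obtain ⟨j, hj⟩ := Nat.exists_eq_add_of_le hk
  generalize #(s ∩ U) = k at *
  subst hj
  have hX := Nat.sub_add_cancel (Nat.le_mul_self (k + j))
  have hY := Nat.sub_add_cancel (Nat.le_mul_self k)
  nlinarith [Nat.mul_le_mul_right j hsU]

theorem biUnion_offDiag_subset_product (K : Finset (Finset α)) :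
    K.biUnion offDiag ⊆ K.biUnion id ×ˢ K.biUnion id := by
  intro p hp
  obtain ⟨s, hs, hp⟩ := mem_biUnion.1 hp
  rw [mem_offDiag] at hp
  exact mem_product.2 ⟨mem_biUnion.2 ⟨s, hs, hp.1⟩, mem_biUnion.2 ⟨s, hs, hp.2.1⟩⟩

theorem add_one_mul_card_biUnion_le {r : ℕ} {K : Finset (Finset α)} (hK : ∀ s ∈ K, #s = r)
    (hconn : ∀ s ∈ K, ∀ t ∈ K,
      Relation.ReflTransGen (fun a b => a ∈ K ∧ b ∈ K ∧ 2 ≤ #(a ∩ b)) s t)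
    (hne : K.Nonempty) :
    (r + 1) * #(K.biUnion id) ≤ #(K.biUnion offDiag) + 2 * r := by
  suffices ∀ n, 1 ≤ n → n ≤ #K → ∃ C ⊆ K, #C = n ∧
      (r + 1) * #(C.biUnion id) ≤ #(C.biUnion offDiag) + 2 * r by
    obtain ⟨C, hCK, hC, hinv⟩ := this #K hne.card_pos le_rfl
    rwa [eq_of_subset_of_card_le hCK hC.ge] at hinv
  intro n hn
  induction n, hn using Nat.le_induction with
  | base =>
    obtain ⟨s, hs⟩ := hne
    refine fun _ => ⟨{s}, singleton_subset_iff.2 hs, card_singleton s, ?_⟩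
    have := Nat.sub_add_cancel (Nat.le_mul_self r)
    simp only [singleton_biUnion, id, offDiag_card, hK s hs]
    nlinarith
  | succ n hn ih =>
    intro hnK
    obtain ⟨C, hCK, hC, hinv⟩ := ih (by omega)
    obtain ⟨c, hc⟩ : C.Nonempty := card_pos.1 (by omega)
    obtain ⟨w, hwK, hwC⟩ : ∃ w ∈ K, w ∉ C := not_subset.1 fun h => by
      have := card_le_card h; omega
    obtain ⟨t, htC, s, hsC, hts⟩ :=
      (hconn c (hCK hc) w hwK).exists_mem_notMem (S := (C : Set (Finset α))) hc hwC
    refine ⟨insert s C, insert_subset hts.2.1 hCK, by rw [card_insert_of_notMem hsC, hC], ?_⟩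
    rw [biUnion_insert, biUnion_insert]
    refine add_one_mul_card_union_le (hK s hts.2.1) ?_ (biUnion_offDiag_subset_product C) hinv
    rw [inter_comm] at hts
    exact hts.2.2.trans (card_le_card (inter_subset_inter_left (subset_biUnion_of_mem id htC)))

end Finset

namespace SimpleGraph

variable {V : Type*} [Fintype V] [DecidableEq V] {G : SimpleGraph V} [DecidableRel G.Adj]

theorem card_biUnion_offDiag_le_two_mul_card_edgeFinset {K : Finset (Finset V)}
    (hK : ∀ s ∈ K, G.IsClique (s : Set V)) : #(K.biUnion offDiag) ≤ 2 * #G.edgeFinset := by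
  rw [two_mul_card_edgeFinset]
  refine card_le_card fun p hp => ?_
  obtain ⟨s, hs, hp⟩ := mem_biUnion.1 hp
  rw [mem_offDiag] at hp
  exact mem_filter.2 ⟨mem_univ p, hK s hs hp.1 hp.2.1 hp.2.2⟩

end SimpleGraph

theorem K4_component_card_le_ten_general {V : Type*} [Fintype V] [DecidableEq V]
    (G : SimpleGraph V)
    (hm : ∀ J : G.Subgraph, J.verts.Nonempty →
      (J.edgeSet.ncard : ℝ) / (J.verts.ncard : ℝ) < 15 / 7)
    (hvtx : ∀ x : V, ∃ s : Finset V, G.IsNClique 4 s ∧ x ∈ s)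
    (hcomp : ∀ s t : Finset V, G.IsNClique 4 s → G.IsNClique 4 t →
      Relation.ReflTransGen
        (fun a b : Finset V => G.IsNClique 4 a ∧ G.IsNClique 4 b ∧ 2 ≤ (a ∩ b).card) s t) :
    Fintype.card V ≤ 10 := by
  classical
  rcases isEmpty_or_nonempty V with _ | ⟨⟨x⟩⟩
  · simp [Fintype.card_eq_zero]
  set K := univ.filter fun s : Finset V => G.IsNClique 4 s
  have hK (s : Finset V) : s ∈ K ↔ G.IsNClique 4 s := by simp [K]
  have hcover : K.biUnion id = univ := eq_univ_of_forall fun y => by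
    obtain ⟨s, hs, hy⟩ := hvtx y
    exact mem_biUnion.2 ⟨s, (hK s).2 hs, hy⟩
  have hgrowth := add_one_mul_card_biUnion_le (r := 4) (fun s hs => ((hK s).1 hs).card_eq)
    (fun s hs t ht => Relation.ReflTransGen.mono (fun a b hab =>
      ⟨(hK a).2 hab.1, (hK b).2 hab.2.1, hab.2.2⟩) s t (hcomp s t ((hK s).1 hs) ((hK t).1 ht)))
    (let ⟨s, hs, _⟩ := hvtx x; ⟨s, (hK s).2 hs⟩)
  rw [hcover, card_univ] at hgrowth
  have hpairs := G.card_biUnion_offDiag_le_two_mul_card_edgeFinset (K := K)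
    fun s hs => ((hK s).1 hs).isClique
  have hdensity := hm ⊤ ⟨x, trivial⟩
  rw [Subgraph.edgeSet_top, Subgraph.verts_top, Set.ncard_univ, Nat.card_eq_fintype_card,
    ← coe_edgeFinset, Set.ncard_coe_finset,
    div_lt_iff₀ (Nat.cast_pos.2 (Fintype.card_pos_iff.2 ⟨x⟩))] at hdensity
  have hedges : 7 * #G.edgeFinset < 15 * Fintype.card V := by
    exact_mod_cast (by linarith : (7 * #G.edgeFinset : ℝ) < 15 * Fintype.card V)
  omega

/-- Every finite graph `G` with maximum density `m(G) < 15/7` in which every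
vertex and edge lies in a 4-clique, and whose 4-cliques form a single
`K_4`-component, has at most 10 vertices. -/
theorem K4_component_card_le_ten {V : Type*} [Fintype V] [DecidableEq V]
    (G : SimpleGraph V)
    (hm : ∀ J : G.Subgraph, J.verts.Nonempty →
      (J.edgeSet.ncard : ℝ) / (J.verts.ncard : ℝ) < 15 / 7)
    (hvtx : ∀ x : V, ∃ s : Finset V, G.IsNClique 4 s ∧ x ∈ s)
    (hedge : ∀ x y : V, G.Adj x y → ∃ s : Finset V, G.IsNClique 4 s ∧ x ∈ s ∧ y ∈ s)
    (hcomp : ∀ s t : Finset V, G.IsNClique 4 s → G.IsNClique 4 t →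
      Relation.ReflTransGen
        (fun a b : Finset V => G.IsNClique 4 a ∧ G.IsNClique 4 b ∧ 2 ≤ (a ∩ b).card) s t) :
    Fintype.card V ≤ 10 :=
  K4_component_card_le_ten_general G hm hvtx hcomp
end
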